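/- arXiv:2203.08109 — 2 statements merged into one kernel-verified Lean document; each statement's English description precedes it below -/
import Mathlib

section
/- If f : O → ℝ has finite Beer variation V_Beer(f) < +∞, then there exists a countable subset Z of O such that f is continuous at every point of O \ Z. -/
open MeasureTheory Set Filter Topology
open scoped ENNReal NNReal

noncomputable section

namespace NAKoksma

variable (K : Type*) [NontriviallyNormedField K] [IsUltrametricDist K]

/-- The ring of integers `O = {x : K | ‖x‖ ≤ 1}` of a non-Archimedean normed field. -/
def RoI : Subring K where
  carrier := {x : K | ‖x‖ ≤ 1}
  mul_mem' := fun {a b} ha hb => by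
    simp only [Set.mem_setOf_eq] at *
    calc ‖a * b‖ = ‖a‖ * ‖b‖ := norm_mul a b
      _ ≤ 1 * 1 := mul_le_mul ha hb (norm_nonneg b) zero_le_one
      _ = 1 := one_mul 1
  one_mem' := by simp
  add_mem' := fun {a b} ha hb => by
    simp only [Set.mem_setOf_eq] at *
    exact (IsUltrametricDist.norm_add_le_max a b).trans (max_le ha hb)
  zero_mem' := by simp
  neg_mem' := fun {a} ha => by
    simp only [Set.mem_setOf_eq, norm_neg] at *
    exact ha

variable (q : ℕ)

/-- The disc of radius `q ^ (-n)` centered at `a` in the ring of integers. -/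
def disc (a : RoI K) (n : ℕ) : Set (RoI K) :=
  {x : RoI K | ‖(x : K) - (a : K)‖ ≤ (q : ℝ) ^ (-(n : ℤ))}

/-- A subset of `O` is a disc if it is of the form `D_r(a)` with `r = q^(-n)`, `0 < r ≤ 1`. -/
def IsDisc (D : Set (RoI K)) : Prop := ∃ (a : RoI K) (n : ℕ), D = disc K q a n

/-- A Taibleson partition: a finite collection of discs partitioning `O`. -/
def IsTaibPartition (P : Finset (Set (RoI K))) : Prop :=
  (∀ D ∈ P, IsDisc K q D) ∧ (P : Set (Set (RoI K))).PairwiseDisjoint id ∧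
    ⋃₀ (P : Set (Set (RoI K))) = Set.univ

/-- `V_Π(f) = Σ_{D ∈ Π} sup_{x,y ∈ D} (f x - f y)`, valued in `[0,∞]`. -/
def VPi (f : RoI K → ℝ) (P : Finset (Set (RoI K))) : ℝ≥0∞ :=
  ∑ D ∈ P, ⨆ x ∈ D, ⨆ y ∈ D, ENNReal.ofReal (f x - f y)

/-- The Taibleson variation `V_Taib(f) = sup_Π V_Π(f)`. -/
def VTaib (f : RoI K → ℝ) : ℝ≥0∞ :=
  ⨆ P : {P : Finset (Set (RoI K)) // IsTaibPartition K q P}, VPi K f P.1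

variable [MeasurableSpace K]

/-- The discrepancy `Δ(X) = sup_D | |X ∩ D| / |X| - μ(D) |` of a finite set `X ⊆ O`. -/
def discrepancy (μ : Measure (RoI K)) (X : Finset (RoI K)) : ℝ :=
  ⨆ D : {D : Set (RoI K) // IsDisc K q D},
    |(Nat.card ↥((X : Set (RoI K)) ∩ D.1) : ℝ) / (X.card : ℝ) - (μ D.1).toReal|

variable (π : RoI K)

/-- The `i`-th point `m_i = a_0 + a_1 π + ⋯ + a_{λ-1} π^{λ-1}` in the dictionary
ordering of the coefficient strings `(a_0, …, a_{λ-1})` with respect to the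
indexing of the coset representatives `S`. -/
def beerPoint (S : ℕ → RoI K) (lam i : ℕ) : RoI K :=
  ∑ j ∈ Finset.range lam, S (i / q ^ (lam - 1 - j) % q) * π ^ j

/-- `V_λ(f) = sup_{x_i ∈ E_i} Σ_{i=1}^{q^λ - 1} |f(x_i) - f(x_{i-1})|` over the ordered Beer
partition `E_0, …, E_{q^λ - 1}` of level `λ`. -/
def VBeerLevel (S : ℕ → RoI K) (f : RoI K → ℝ) (lam : ℕ) : ℝ≥0∞ :=
  ⨆ x : {x : ℕ → RoI K // ∀ i < q ^ lam, x i ∈ disc K q (beerPoint K q π S lam i) lam},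
    ∑ i ∈ Finset.Ico 1 (q ^ lam), ENNReal.ofReal |f (x.1 i) - f (x.1 (i - 1))|

/-- The Beer variation `V_Beer(f) = lim_{λ→∞} V_λ(f) = sup_{λ ≥ 1} V_λ(f)`. -/
def VBeer (S : ℕ → RoI K) (f : RoI K → ℝ) : ℝ≥0∞ :=
  ⨆ lam : ℕ, VBeerLevel K q π S f (lam + 1)

/-- `S : ℕ → O` (through indices `0, …, q-1`) is a complete ordered system of coset
representatives for the residue field `O/πO`, containing `0`. -/
def IsRepSystem (S : ℕ → RoI K) : Prop :=
  (∃ i, i < q ∧ S i = 0) ∧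
    Function.Bijective fun i : Fin q => Ideal.Quotient.mk (Ideal.span {π}) (S (i : ℕ))

/-- The Berkovich-analytic variation
`V_Berk(f) = Σ_D Σ_{D' ≺ D} |f(D') - f(D)|`, where `D' ≺ D` means `D' ⊆ D` and
`μ(D') = μ(D)/q`, and `f(D)` denotes the average of `f` over `D`. -/
def VBerk (μ : Measure (RoI K)) (f : RoI K → ℝ) : ℝ≥0∞ :=
  ∑' D : {D : Set (RoI K) // IsDisc K q D},
    ∑' D' : {D' : Set (RoI K) // IsDisc K q D' ∧ D' ⊆ D.1 ∧ μ D' = μ D.1 / (q : ℝ≥0∞)},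
      ENNReal.ofReal |(⨍ x in D'.1, f x ∂μ) - ⨍ x in D.1, f x ∂μ|

/-- The level `ℓ(γ)` of a character `γ : O → 𝕋`: the least `ℓ ≥ 0` such that `γ` is trivial
on `π^ℓ O`. -/
def charLevel (γ : AddChar (RoI K) Circle) : ℕ :=
  sInf {l : ℕ | ∀ y : RoI K, γ (π ^ l * y) = 1}

/-- The Fourier coefficient `f̂(γ) = ∫_O f(x) conj(γ(x)) dμ(x)`. -/
def fourierCoeff (μ : Measure (RoI K)) (f : RoI K → ℂ) (γ : AddChar (RoI K) Circle) : ℂ :=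
  ∫ x, f x * (starRingEnd ℂ) ((γ x : Circle) : ℂ) ∂μ

/-- The Fourier-analytic variation `V_Fourier(f) = Σ_{γ ≠ γ₀} q^{ℓ(γ)} |f̂(γ)|`, the sum over
all nontrivial continuous characters of `O`. -/
def VFourier (μ : Measure (RoI K)) (f : RoI K → ℝ) : ℝ≥0∞ :=
  ∑' γ : {γ : AddChar (RoI K) Circle // Continuous ⇑γ ∧ γ ≠ 1},
    ENNReal.ofReal ((q : ℝ) ^ charLevel K π γ.1 * ‖fourierCoeff K μ (fun x => (f x : ℂ)) γ.1‖)

/-- A function is a finite linear combination of characteristic functions of discs. -/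
def IsDiscSimple (g : RoI K → ℝ) : Prop :=
  ∃ (P : Finset (Set (RoI K))) (c : Set (RoI K) → ℝ),
    (∀ D ∈ P, IsDisc K q D) ∧ g = fun x => ∑ D ∈ P, c D * D.indicator 1 x

/-- Integrability in the sense of Beer: `f` can be squeezed between finite linear combinations
of characteristic functions of discs with integrals converging to each other. -/
def BeerIntegrable [MeasurableSpace K] (μ : Measure (RoI K)) (f : RoI K → ℝ) : Prop :=
  ∃ u v : ℕ → RoI K → ℝ,
    (∀ n, IsDiscSimple K q (u n)) ∧ (∀ n, IsDiscSimple K q (v n)) ∧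
    (∀ n x, u n x ≤ f x ∧ f x ≤ v n x) ∧
    Tendsto (fun n => ∫ x, (v n x - u n x) ∂μ) atTop (𝓝 0)

variable [LocallyCompactSpace K] [BorelSpace K]

/-!
For `ε > 0` let `J_ε` be the set of points `x` near which `f` takes values at distance `≥ ε`
from `f x`; `f` is continuous off `⋃ₙ J_{1/(n+1)}`, so it suffices that every `J_ε` is finite.
Given `N` points of `J_ε`, separate them by discs of some level `l`, pick for each `x` a partner
`y` in its level-`l` disc with `|f y - f x| ≥ ε`, and a level `L ≥ l` separating every `x` from
its partner. The Beer order is lexicographic, so the level-`L` indices inside one level-`l` disc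
form a block of consecutive integers; the index intervals between the pairs are therefore
disjoint, and with `x` and `y` as sample points telescoping gives `N ε ≤ V_L(f) ≤ V_Beer(f)`.
-/

theorem abs_sub_le_sum_Ioc (g : ℕ → ℝ) {a b : ℕ} (hab : a ≤ b) :
    |g b - g a| ≤ ∑ i ∈ Finset.Ioc a b, |g i - g (i - 1)| := by
  induction b, hab using Nat.le_induction with
  | base => simp
  | succ b hab ih =>
    rw [Finset.sum_Ioc_succ_top (by omega), Nat.add_sub_cancel]
    linarith [abs_sub_le (g (b + 1)) (g b) (g a)]

theorem ofReal_abs_sub_le_sum_Ioc_min_max (g : ℕ → ℝ) (a b : ℕ) :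
    ENNReal.ofReal |g b - g a| ≤
      ∑ i ∈ Finset.Ioc (min a b) (max a b), ENNReal.ofReal |g i - g (i - 1)| := by
  rw [← ENNReal.ofReal_sum_of_nonneg fun _ _ => abs_nonneg _]
  refine ENNReal.ofReal_le_ofReal ?_
  rcases le_total a b with h | h
  · simpa only [min_eq_left h, max_eq_right h] using abs_sub_le_sum_Ioc g h
  · simpa only [min_eq_right h, max_eq_left h, abs_sub_comm] using abs_sub_le_sum_Ioc g h

theorem pairwiseDisjoint_Ioc_min_max_of_div_eq {ι : Type*} {s : Set ι} {a b t : ι → ℕ} {Q : ℕ}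
    (ha : ∀ k ∈ s, a k / Q = t k) (hb : ∀ k ∈ s, b k / Q = t k) (ht : s.InjOn t) :
    s.PairwiseDisjoint fun k => Finset.Ioc (min (a k) (b k)) (max (a k) (b k)) := by
  have hblock : ∀ k ∈ s, ∀ m ∈ Finset.Ioc (min (a k) (b k)) (max (a k) (b k)), m / Q = t k := by
    intro k hk m hm
    rw [Finset.mem_Ioc] at hm
    have hlo := Nat.div_le_div_right (c := Q) hm.1.le
    have hhi := Nat.div_le_div_right (c := Q) hm.2
    rcases le_total (a k) (b k) with h | h <;>
      simp only [min_eq_left, min_eq_right, max_eq_left, max_eq_right, h, ha k hk, hb k hk]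
        at hlo hhi <;> omega
  intro k hk k' hk' hne
  refine Finset.disjoint_left.2 fun m hm hm' => hne (ht hk hk' ?_)
  rw [← hblock k hk m hm, hblock k' hk' m hm']

theorem sum_ofReal_abs_sub_le_of_pairwiseDisjoint {ι : Type*} (g : ℕ → ℝ) {s : Finset ι}
    {a b : ι → ℕ} {N : ℕ} (hN : ∀ k ∈ s, max (a k) (b k) < N)
    (hdisj : (s : Set ι).PairwiseDisjoint fun k => Finset.Ioc (min (a k) (b k)) (max (a k) (b k))) :
    ∑ k ∈ s, ENNReal.ofReal |g (b k) - g (a k)| ≤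
      ∑ i ∈ Finset.Ico 1 N, ENNReal.ofReal |g i - g (i - 1)| := by
  classical
  calc ∑ k ∈ s, ENNReal.ofReal |g (b k) - g (a k)|
      ≤ ∑ k ∈ s, ∑ i ∈ Finset.Ioc (min (a k) (b k)) (max (a k) (b k)),
          ENNReal.ofReal |g i - g (i - 1)| :=
        Finset.sum_le_sum fun k _ => ofReal_abs_sub_le_sum_Ioc_min_max g _ _
    _ = ∑ i ∈ s.biUnion fun k => Finset.Ioc (min (a k) (b k)) (max (a k) (b k)),
          ENNReal.ofReal |g i - g (i - 1)| := (Finset.sum_biUnion hdisj).symm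
    _ ≤ ∑ i ∈ Finset.Ico 1 N, ENNReal.ofReal |g i - g (i - 1)| := by
        refine Finset.sum_le_sum_of_subset fun i hi => ?_
        obtain ⟨k, hk, hi⟩ := Finset.mem_biUnion.1 hi
        have := hN k hk
        rw [Finset.mem_Ioc] at hi
        rw [Finset.mem_Ico]
        omega

def jumpSet {X Y : Type*} [TopologicalSpace X] [Dist Y] (f : X → Y) (ε : ℝ) : Set X :=
  {x | ∃ᶠ z in 𝓝 x, ε ≤ dist (f z) (f x)}

theorem countable_setOf_not_continuousAt {X Y : Type*} [TopologicalSpace X] [PseudoMetricSpace Y]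
    {f : X → Y} (h : ∀ ε > 0, (jumpSet f ε).Countable) : {x | ¬ContinuousAt f x}.Countable := by
  refine (Set.countable_iUnion fun n : ℕ => h (1 / (n + 1)) Nat.one_div_pos_of_nat).mono
    fun x hx => ?_
  obtain ⟨ε, hε, hjump⟩ : ∃ ε > 0, ∃ᶠ z in 𝓝 x, ε ≤ dist (f z) (f x) := by
    simpa [ContinuousAt, Metric.tendsto_nhds] using hx
  obtain ⟨n, hn⟩ := exists_nat_one_div_lt hε
  exact Set.mem_iUnion.2 ⟨n, hjump.mono fun z hz => hn.le.trans hz⟩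

section BeerPartition

omit [MeasurableSpace K] [LocallyCompactSpace K] [BorelSpace K]

variable {K}

def digitShift (q : ℕ) (π : RoI K) (S : ℕ → RoI K) (z : RoI K) : ℕ × RoI K :=
  Classical.epsilon fun p => p.1 < q ∧ z = S p.1 + π * p.2

/-- The index `i < q ^ l` of the level-`l` Beer disc `E_i` containing `z`; the leading digit of `z`
is the most significant one, as in the dictionary order of `beerPoint`. -/
def beerIndex (q : ℕ) (π : RoI K) (S : ℕ → RoI K) : ℕ → RoI K → ℕ
  | 0, _ => 0
  | l + 1, z => (digitShift q π S z).1 * q ^ l + beerIndex q π S l (digitShift q π S z).2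

variable {q π} {S : ℕ → RoI K}

theorem IsRepSystem.pos (hS : IsRepSystem K q π S) : 0 < q := by
  obtain ⟨i, hi, -⟩ := hS.1
  omega

theorem mem_disc_iff {a x : RoI K} {n : ℕ} : x ∈ disc K q a n ↔ dist x a ≤ (q : ℝ)⁻¹ ^ n := by
  rw [disc, Set.mem_ofPred_eq, Subtype.dist_eq, dist_eq_norm, zpow_neg, zpow_natCast, inv_pow]

theorem dist_add_mul_uniformizer (hπ : ‖(π : K)‖ = (q : ℝ)⁻¹) (s u v : RoI K) :
    dist (s + π * u) (s + π * v) = (q : ℝ)⁻¹ * dist u v := by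
  rw [dist_add_left, Subtype.dist_eq, Subtype.dist_eq, dist_eq_norm, dist_eq_norm]
  push_cast
  rw [← mul_sub, norm_mul, hπ]

theorem mk_eq_of_dist_le (hq : 0 < q) (hπ : ‖(π : K)‖ = (q : ℝ)⁻¹) {x y : RoI K}
    (h : dist x y ≤ (q : ℝ)⁻¹) :
    Ideal.Quotient.mk (Ideal.span {π}) x = Ideal.Quotient.mk (Ideal.span {π}) y := by
  have hπ0 : (π : K) ≠ 0 := by
    rw [← norm_pos_iff, hπ]
    positivity
  have hw : ‖((x : K) - y) / π‖ ≤ 1 := by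
    rw [norm_div, hπ, div_le_one (by positivity)]
    rwa [Subtype.dist_eq, dist_eq_norm] at h
  refine Ideal.Quotient.eq.2 (Ideal.mem_span_singleton'.2 ⟨⟨_, hw⟩, Subtype.ext ?_⟩)
  push_cast
  field_simp

theorem exists_digitShift (hS : IsRepSystem K q π S) (z : RoI K) :
    ∃ p : ℕ × RoI K, p.1 < q ∧ z = S p.1 + π * p.2 := by
  obtain ⟨i, hi⟩ := hS.2.surjective (Ideal.Quotient.mk _ z)
  obtain ⟨c, hc⟩ := Ideal.mem_span_singleton.1 (Ideal.Quotient.eq.1 hi)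
  exact ⟨(i, -c), i.isLt, by rw [mul_neg, ← hc]; ring⟩

theorem digitShift_spec (hS : IsRepSystem K q π S) (z : RoI K) :
    (digitShift q π S z).1 < q ∧ z = S (digitShift q π S z).1 + π * (digitShift q π S z).2 :=
  Classical.epsilon_spec (exists_digitShift hS z)

theorem digitShift_fst_eq_of_dist_le (hS : IsRepSystem K q π S) (hπ : ‖(π : K)‖ = (q : ℝ)⁻¹)
    {x y : RoI K} (h : dist x y ≤ (q : ℝ)⁻¹) : (digitShift q π S x).1 = (digitShift q π S y).1 := by
  have mk_digit : ∀ z, Ideal.Quotient.mk (Ideal.span {π}) (S (digitShift q π S z).1) =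
      Ideal.Quotient.mk (Ideal.span {π}) z := fun z =>
    Ideal.Quotient.eq.2 (Ideal.mem_span_singleton'.2
      ⟨-(digitShift q π S z).2, by linear_combination (digitShift_spec hS z).2⟩)
  exact Fin.mk.inj_iff.1 <| hS.2.injective (a₁ := ⟨_, (digitShift_spec hS x).1⟩)
    (a₂ := ⟨_, (digitShift_spec hS y).1⟩) (by simp only [mk_digit, mk_eq_of_dist_le hS.pos hπ h])

theorem beerPoint_succ (hq : 0 < q) {a i l : ℕ} (ha : a < q) (hi : i < q ^ l) :
    beerPoint K q π S (l + 1) (a * q ^ l + i) = S a + π * beerPoint K q π S l i := by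
  simp only [beerPoint]
  rw [Finset.sum_range_succ', Finset.mul_sum]
  have h0 : (a * q ^ l + i) / q ^ (l + 1 - 1 - 0) % q = a := by
    rw [show l + 1 - 1 - 0 = l by omega, mul_comm, Nat.mul_add_div (pow_pos hq l),
      Nat.div_eq_of_lt hi, add_zero, Nat.mod_eq_of_lt ha]
  rw [h0, pow_zero, mul_one, add_comm]
  congr 1
  refine Finset.sum_congr rfl fun j hj => ?_
  rw [Finset.mem_range] at hj
  have hdigit : (a * q ^ l + i) / q ^ (l - 1 - j) % q = i / q ^ (l - 1 - j) % q := by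
    rw [show q ^ l = q ^ (l - 1 - j) * q ^ (j + 1) by rw [← pow_add]; congr 1; omega,
      show a * (q ^ (l - 1 - j) * q ^ (j + 1)) + i = q ^ (l - 1 - j) * (a * q ^ (j + 1)) + i by
        ring,
      Nat.mul_add_div (pow_pos hq _), pow_succ, ← mul_assoc, add_comm,
      Nat.add_mul_mod_self_right]
  rw [show l + 1 - 1 - (j + 1) = l - 1 - j by omega, hdigit, pow_succ]
  ring

theorem beerIndex_lt (hS : IsRepSystem K q π S) (l : ℕ) (z : RoI K) :
    beerIndex q π S l z < q ^ l := by
  induction l generalizing z with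
  | zero => simp [beerIndex]
  | succ l ih =>
    have ha := (digitShift_spec hS z).1
    have hi := ih (digitShift q π S z).2
    rw [beerIndex, pow_succ]
    nlinarith

theorem beerPoint_beerIndex_succ (hS : IsRepSystem K q π S) (l : ℕ) (z : RoI K) :
    beerPoint K q π S (l + 1) (beerIndex q π S (l + 1) z) =
      S (digitShift q π S z).1 +
        π * beerPoint K q π S l (beerIndex q π S l (digitShift q π S z).2) :=
  beerPoint_succ hS.pos (digitShift_spec hS z).1 (beerIndex_lt hS l _)

theorem dist_beerPoint_beerIndex_le (hS : IsRepSystem K q π S) (hπ : ‖(π : K)‖ = (q : ℝ)⁻¹)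
    (l : ℕ) (z : RoI K) : dist z (beerPoint K q π S l (beerIndex q π S l z)) ≤ (q : ℝ)⁻¹ ^ l := by
  induction l generalizing z with
  | zero =>
    simp only [beerPoint, Finset.range_zero, Finset.sum_empty, dist_zero_right, pow_zero]
    exact z.prop
  | succ l ih =>
    rw [beerPoint_beerIndex_succ hS]
    nth_rewrite 1 [(digitShift_spec hS z).2]
    rw [dist_add_mul_uniformizer hπ, pow_succ']
    gcongr
    exact ih _

theorem beerIndex_div (hS : IsRepSystem K q π S) {l L : ℕ} (hlL : l ≤ L) (z : RoI K) :
    beerIndex q π S L z / q ^ (L - l) = beerIndex q π S l z := by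
  induction L generalizing l z with
  | zero =>
    obtain rfl : l = 0 := by omega
    simp [beerIndex]
  | succ L ih =>
    cases l with
    | zero => exact Nat.div_eq_of_lt (beerIndex_lt hS _ z)
    | succ l =>
      have hQ : q ^ L = q ^ (L - l) * q ^ l := by rw [← pow_add]; congr 1; omega
      simp only [beerIndex]
      rw [Nat.add_sub_add_right, ← ih (l := l) (by omega), hQ, mul_left_comm,
        Nat.mul_add_div (pow_pos hS.pos _)]

theorem beerIndex_eq_iff (hS : IsRepSystem K q π S) (hπ : ‖(π : K)‖ = (q : ℝ)⁻¹) {l : ℕ}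
    {x y : RoI K} : beerIndex q π S l x = beerIndex q π S l y ↔ dist x y ≤ (q : ℝ)⁻¹ ^ l := by
  constructor
  · intro h
    have hx := dist_beerPoint_beerIndex_le hS hπ l x
    have hy := dist_beerPoint_beerIndex_le hS hπ l y
    rw [h] at hx
    rw [dist_comm] at hy
    exact (dist_triangle_max x _ y).trans (max_le hx hy)
  · induction l generalizing x y with
    | zero => intro; rfl
    | succ l ih =>
      intro h
      have hdigit : (digitShift q π S x).1 = (digitShift q π S y).1 :=
        digitShift_fst_eq_of_dist_le hS hπ
          (h.trans (pow_le_of_le_one (by positivity) (Nat.cast_inv_le_one q) (by omega)))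
      have hshift : dist x y = (q : ℝ)⁻¹ * dist (digitShift q π S x).2 (digitShift q π S y).2 := by
        rw [← dist_add_mul_uniformizer hπ (S (digitShift q π S x).1), ← (digitShift_spec hS x).2,
          hdigit, ← (digitShift_spec hS y).2]
      have hq_inv : (0 : ℝ) < (q : ℝ)⁻¹ := by have := hS.pos; positivity
      rw [hshift, pow_succ', mul_le_mul_iff_right₀ hq_inv] at h
      simp only [beerIndex, hdigit, ih h]

theorem eventually_beerIndex_eq (hS : IsRepSystem K q π S) (hπ : ‖(π : K)‖ = (q : ℝ)⁻¹)
    (l : ℕ) (x : RoI K) : ∀ᶠ z in 𝓝 x, beerIndex q π S l z = beerIndex q π S l x := by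
  have hq := hS.pos
  filter_upwards [Metric.closedBall_mem_nhds x (by positivity : 0 < (q : ℝ)⁻¹ ^ l)] with z hz
  exact (beerIndex_eq_iff hS hπ).2 hz

theorem eventually_beerIndex_ne (hq : 1 < q) (hS : IsRepSystem K q π S)
    (hπ : ‖(π : K)‖ = (q : ℝ)⁻¹) {x y : RoI K} (hxy : x ≠ y) :
    ∀ᶠ l in atTop, beerIndex q π S l x ≠ beerIndex q π S l y := by
  have hlim : Tendsto (fun l : ℕ => (q : ℝ)⁻¹ ^ l) atTop (𝓝 0) :=
    tendsto_pow_atTop_nhds_zero_of_lt_one (by positivity)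
      (inv_lt_one_of_one_lt₀ (by exact_mod_cast hq))
  filter_upwards [hlim.eventually (gt_mem_nhds (dist_pos.2 hxy))] with l hl
  rw [Ne, beerIndex_eq_iff hS hπ, not_le]
  exact hl

theorem exists_beerSample (hS : IsRepSystem K q π S) (hπ : ‖(π : K)‖ = (q : ℝ)⁻¹) {L : ℕ}
    {s : Set (RoI K)} (hs : s.InjOn (beerIndex q π S L)) :
    ∃ c : ℕ → RoI K, (∀ i < q ^ L, c i ∈ disc K q (beerPoint K q π S L i) L) ∧
      ∀ z ∈ s, c (beerIndex q π S L z) = z := by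
  classical
  refine ⟨fun i => if h : ∃ z ∈ s, beerIndex q π S L z = i then h.choose
    else beerPoint K q π S L i, fun i _ => ?_, fun z hz => ?_⟩
  · dsimp only
    split_ifs with h
    · have hmem := dist_beerPoint_beerIndex_le hS hπ L h.choose
      rwa [h.choose_spec.2, ← mem_disc_iff] at hmem
    · rw [mem_disc_iff, dist_self]
      positivity
  · have h : ∃ z' ∈ s, beerIndex q π S L z' = beerIndex q π S L z := ⟨z, hz, rfl⟩
    simp only [dif_pos h]
    exact hs h.choose_spec.1 hz h.choose_spec.2

theorem sum_ofReal_abs_sub_le_VBeerLevel (hS : IsRepSystem K q π S)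
    (hπ : ‖(π : K)‖ = (q : ℝ)⁻¹) (f : RoI K → ℝ) {F : Finset (RoI K)} {y : RoI K → RoI K}
    {l L : ℕ} (hlL : l ≤ L) (hF : Set.InjOn (beerIndex q π S l) F)
    (hy : ∀ x ∈ F, beerIndex q π S l (y x) = beerIndex q π S l x)
    (hyL : ∀ x ∈ F, beerIndex q π S L (y x) ≠ beerIndex q π S L x) :
    ∑ x ∈ F, ENNReal.ofReal |f (y x) - f x| ≤ VBeerLevel K q π S f L := by
  set I := beerIndex q π S L
  have hblock : ∀ x ∈ F, ∀ z ∈ ({x, y x} : Set (RoI K)),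
      I z / q ^ (L - l) = beerIndex q π S l x := by
    rintro x hx z (rfl | rfl) <;> rw [beerIndex_div hS hlL]
    exact hy x hx
  have hinj : Set.InjOn I (⋃ x ∈ F, {x, y x}) := by
    intro z hz z' hz' h
    simp only [Set.mem_iUnion] at hz hz'
    obtain ⟨x, hx, hzx⟩ := hz
    obtain ⟨x', hx', hzx'⟩ := hz'
    obtain rfl : x = x' := hF hx hx' (by rw [← hblock x hx z hzx, ← hblock x' hx' z' hzx', h])
    rcases hzx with rfl | rfl <;> rcases hzx' with rfl | rfl
    exacts [rfl, (hyL z hx h.symm).elim, (hyL z' hx h).elim, rfl]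
  obtain ⟨c, hc, hcI⟩ := exists_beerSample hS hπ hinj
  have hcI' : ∀ x ∈ F, ∀ z ∈ ({x, y x} : Set (RoI K)), c (I z) = z :=
    fun x hx z hz => hcI z (Set.mem_iUnion₂.2 ⟨x, hx, hz⟩)
  calc ∑ x ∈ F, ENNReal.ofReal |f (y x) - f x|
      = ∑ x ∈ F, ENNReal.ofReal |f (c (I (y x))) - f (c (I x))| :=
        Finset.sum_congr rfl fun x hx => by rw [hcI' x hx x (by simp), hcI' x hx (y x) (by simp)]
    _ ≤ ∑ i ∈ Finset.Ico 1 (q ^ L), ENNReal.ofReal |f (c i) - f (c (i - 1))| :=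
        sum_ofReal_abs_sub_le_of_pairwiseDisjoint (fun i => f (c i))
          (fun x _ => max_lt (beerIndex_lt hS L x) (beerIndex_lt hS L (y x)))
          (pairwiseDisjoint_Ioc_min_max_of_div_eq (fun x hx => hblock x hx x (by simp))
            (fun x hx => hblock x hx (y x) (by simp)) hF)
    _ ≤ VBeerLevel K q π S f L :=
        le_iSup (fun c : {c : ℕ → RoI K // ∀ i < q ^ L, c i ∈ disc K q (beerPoint K q π S L i) L} =>
          ∑ i ∈ Finset.Ico 1 (q ^ L), ENNReal.ofReal |f (c.1 i) - f (c.1 (i - 1))|) ⟨c, hc⟩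

theorem VBeerLevel_le_VBeer (f : RoI K → ℝ) (L : ℕ) :
    VBeerLevel K q π S f L ≤ VBeer K q π S f := by
  cases L with
  | zero => simp [VBeerLevel]
  | succ L => exact le_iSup (fun lam => VBeerLevel K q π S f (lam + 1)) L

theorem eventually_injOn_beerIndex (hq : 1 < q) (hS : IsRepSystem K q π S)
    (hπ : ‖(π : K)‖ = (q : ℝ)⁻¹) (F : Finset (RoI K)) :
    ∀ᶠ l in atTop, Set.InjOn (beerIndex q π S l) F := by
  have : ∀ᶠ l in atTop, ∀ x ∈ F, ∀ x' ∈ F, beerIndex q π S l x = beerIndex q π S l x' → x = x' := by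
    refine (eventually_all_finset F).2 fun x _ => (eventually_all_finset F).2 fun x' _ => ?_
    by_cases h : x = x'
    · exact Eventually.of_forall fun _ _ => h
    · exact (eventually_beerIndex_ne hq hS hπ h).mono fun _ hne heq => (hne heq).elim
  filter_upwards [this] with l hl x hx x' hx' h
  exact hl x hx x' hx' h

theorem card_mul_le_VBeer (hq : 1 < q) (hS : IsRepSystem K q π S)
    (hπ : ‖(π : K)‖ = (q : ℝ)⁻¹) {f : RoI K → ℝ} {ε : ℝ} (hε : 0 < ε) {F : Finset (RoI K)}
    (hF : ↑F ⊆ jumpSet f ε) : F.card * ENNReal.ofReal ε ≤ VBeer K q π S f := by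
  obtain ⟨l, hl⟩ := (eventually_injOn_beerIndex hq hS hπ F).exists
  have hjump : ∀ x ∈ F, ∃ y, beerIndex q π S l y = beerIndex q π S l x ∧ ε ≤ |f y - f x| :=
    fun x hx => ((hF hx).and_eventually (eventually_beerIndex_eq hS hπ l x)).exists.imp
      fun y hy => ⟨hy.2, hy.1⟩
  choose! y hyl hyε using hjump
  have hyne : ∀ x ∈ F, y x ≠ x := fun x hx h => by
    have := hyε x hx
    rw [h, sub_self, abs_zero] at this
    linarith
  obtain ⟨L, hlL, hL⟩ : ∃ L, l ≤ L ∧ ∀ x ∈ F, beerIndex q π S L (y x) ≠ beerIndex q π S L x :=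
    ((eventually_ge_atTop l).and ((eventually_all_finset F).2 fun x hx =>
      eventually_beerIndex_ne hq hS hπ (hyne x hx))).exists
  calc (F.card : ℝ≥0∞) * ENNReal.ofReal ε = ∑ x ∈ F, ENNReal.ofReal ε := by simp
    _ ≤ ∑ x ∈ F, ENNReal.ofReal |f (y x) - f x| :=
        Finset.sum_le_sum fun x hx => ENNReal.ofReal_le_ofReal (hyε x hx)
    _ ≤ VBeerLevel K q π S f L := sum_ofReal_abs_sub_le_VBeerLevel hS hπ f hlL hl hyl hL
    _ ≤ VBeer K q π S f := VBeerLevel_le_VBeer f L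

theorem finite_jumpSet_of_VBeer_ne_top (hq : 1 < q) (hS : IsRepSystem K q π S)
    (hπ : ‖(π : K)‖ = (q : ℝ)⁻¹) {f : RoI K → ℝ} (hf : VBeer K q π S f ≠ ⊤) {ε : ℝ}
    (hε : 0 < ε) : (jumpSet f ε).Finite := by
  by_contra hinf
  obtain ⟨n, hn⟩ := ENNReal.exists_nat_mul_gt (ENNReal.ofReal_pos.2 hε).ne' hf
  obtain ⟨F, hF, rfl⟩ := Set.Infinite.exists_subset_card_eq hinf n
  exact (card_mul_le_VBeer hq hS hπ hε hF).not_gt hn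

end BeerPartition

theorem beer_finite_variation_continuous_off_countable
    (hq : 1 < q)
    (hπ : ‖(π : K)‖ = (q : ℝ)⁻¹)
    (S : ℕ → RoI K) (hS : IsRepSystem K q π S)
    (f : RoI K → ℝ) (hf : VBeer K q π S f < ⊤) :
    ∃ Z : Set (RoI K), Z.Countable ∧ ∀ x : RoI K, x ∉ Z → ContinuousAt f x :=
  ⟨{x | ¬ContinuousAt f x},
    countable_setOf_not_continuousAt fun _ hε =>
      (finite_jumpSet_of_VBeer_ne_top hq hS hπ hf.ne hε).countable,
    fun _ hx => not_not.1 hx⟩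

end NAKoksma
end
end

section
/- If f : O → ℝ is Haar-integrable and has finite Berkovich-analytic variation V_Berk(f) < +∞, then there exists a unique continuous function g : O → ℝ such that f(x) = g(x) for Haar-almost all x ∈ O. -/
open MeasureTheory Set Filter Topology
open scoped ENNReal NNReal

noncomputable section

namespace NAKoksma

variable (K : Type*) [NontriviallyNormedField K] [IsUltrametricDist K]

variable (q : ℕ)

variable [MeasurableSpace K]

variable (π : RoI K)

variable [LocallyCompactSpace K] [BorelSpace K]


/-! The averages `A_n(x) = f(D_{q^{-n}}(x))` over the discs shrinking to `x` form a chain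
`D_{q^{-n-1}}(x) ≺ D_{q^{-n}}(x)`, so `|A_{n+1}(x) - A_n(x)|` is a term of `V_Berk(f)`. A disc
of level `n` has measure `q^{-n}`, hence `Σ_{n ≥ N} |A_{n+1}(x) - A_n(x)|` is bounded, uniformly
in `x`, by the part of `V_Berk(f)` carried by discs of measure at most `q^{-N}`, which tends to
`0`. The locally constant functions `A_n` therefore converge uniformly to a continuous `g`. Haar
measure on `O` is doubling, so by Lebesgue differentiation `A_n → f` almost everywhere, i.e.
`f = g` a.e.; uniqueness holds because Haar measure charges every open set. -/

open Metric

theorem _root_.Ideal.map_mulLeft_span_singleton {R : Type*} [CommRing R] (a b : R) :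
    (Ideal.span {b}).toAddSubgroup.map (AddMonoidHom.mulLeft a) =
      (Ideal.span {a * b}).toAddSubgroup := by
  ext x
  simp only [AddSubgroup.mem_map, Submodule.mem_toAddSubgroup, Ideal.mem_span_singleton',
    AddMonoidHom.coe_mulLeft]
  constructor
  · rintro ⟨_, ⟨c, rfl⟩, rfl⟩
    exact ⟨c, by ring⟩
  · rintro ⟨c, rfl⟩
    exact ⟨c * b, ⟨c, rfl⟩, by ring⟩

theorem _root_.Ideal.index_span_singleton_pow {R : Type*} [CommRing R] [IsDomain R] {a : R}
    (ha : a ≠ 0) (n : ℕ) :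
    (Ideal.span {a ^ n}).toAddSubgroup.index = (Ideal.span {a}).toAddSubgroup.index ^ n := by
  induction n with
  | zero => simp
  | succ n ih =>
    have hle : (Ideal.span {a ^ n * a}).toAddSubgroup ≤ (Ideal.span {a ^ n}).toAddSubgroup :=
      Submodule.toAddSubgroup_mono (Ideal.span_singleton_le_span_singleton.2 (dvd_mul_right _ _))
    have hrel : (Ideal.span {a ^ n * a}).toAddSubgroup.relIndex
        (Ideal.span {a ^ n}).toAddSubgroup = (Ideal.span {a}).toAddSubgroup.index := by
      have hinj : Function.Injective (AddMonoidHom.mulLeft (a ^ n)) :=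
        mul_right_injective₀ (pow_ne_zero n ha)
      calc _ = ((Ideal.span {a}).toAddSubgroup.map (AddMonoidHom.mulLeft (a ^ n))).relIndex
            ((Ideal.span {1}).toAddSubgroup.map (AddMonoidHom.mulLeft (a ^ n))) := by
            rw [Ideal.map_mulLeft_span_singleton, Ideal.map_mulLeft_span_singleton, mul_one]
        _ = _ := by
            rw [AddSubgroup.relIndex_map_map_of_injective _ _ hinj, Ideal.span_singleton_one,
              Submodule.top_toAddSubgroup, AddSubgroup.relIndex_top_right]
    rw [pow_succ, ← AddSubgroup.relIndex_mul_index hle, hrel, ih, pow_succ, mul_comm]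

theorem _root_.ENNReal.tendsto_tsum_subtype_le_zero {α ι : Type*} {f : α → ℝ≥0∞}
    (hf : ∑' a, f a ≠ ∞) {φ : α → ℝ≥0∞} (hφ : ∀ a, 0 < φ a) {l : Filter ι} {δ : ι → ℝ≥0∞}
    (hδ : Tendsto δ l (𝓝 0)) :
    Tendsto (fun i => ∑' a : {a // φ a ≤ δ i}, f a) l (𝓝 0) := by
  rw [ENNReal.tendsto_nhds_zero]
  intro ε hε
  obtain ⟨s, hs⟩ := ((ENNReal.tendsto_tsum_compl_atTop_zero hf).eventually (gt_mem_nhds hε)).exists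
  have hδs : ∀ᶠ i in l, ∀ a ∈ s, δ i < φ a :=
    (eventually_all_finset s).2 fun a _ => hδ.eventually (gt_mem_nhds (hφ a))
  filter_upwards [hδs] with i hi
  refine le_trans (ENNReal.tsum_mono_subtype f (t := {a | a ∉ s}) ?_) hs.le
  exact fun a ha has => (hi a has).not_ge ha

section Discs

variable {K q} {π : RoI K}

omit [MeasurableSpace K] [LocallyCompactSpace K] [BorelSpace K]

lemma disc_eq_closedBall (a : RoI K) (n : ℕ) :
    disc K q a n = closedBall a ((q : ℝ) ^ n)⁻¹ := by
  ext x
  rw [disc, mem_ofPred_eq, mem_closedBall, Subtype.dist_eq, dist_eq_norm, zpow_neg, zpow_natCast]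

lemma disc_level_zero (a : RoI K) : disc K q a 0 = univ := by
  refine eq_univ_of_forall fun x => ?_
  rw [disc_eq_closedBall, pow_zero, inv_one, mem_closedBall]
  refine (IsUltrametricDist.dist_triangle_max x 0 a).trans (max_le ?_ ?_)
  · exact (dist_zero_right x).trans_le x.2
  · exact (dist_zero_left a).trans_le a.2

lemma disc_succ_subset (hq : 1 ≤ q) (a : RoI K) (n : ℕ) :
    disc K q a (n + 1) ⊆ disc K q a n := by
  rw [disc_eq_closedBall, disc_eq_closedBall]
  refine closedBall_subset_closedBall (inv_anti₀ (by positivity) ?_)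
  exact pow_le_pow_right₀ (by exact_mod_cast hq) n.le_succ

lemma disc_eq_of_mem {a x : RoI K} {n : ℕ} (hx : x ∈ disc K q a n) :
    disc K q x n = disc K q a n := by
  rw [disc_eq_closedBall, disc_eq_closedBall] at *
  exact (IsUltrametricDist.closedBall_eq_of_mem hx).symm

lemma disc_mem_nhds (hq : q ≠ 0) (a : RoI K) (n : ℕ) : disc K q a n ∈ 𝓝 a := by
  rw [disc_eq_closedBall]
  exact closedBall_mem_nhds a (by positivity)

lemma dvd_iff_norm_le {x y : RoI K} (hy : y ≠ 0) : y ∣ x ↔ ‖(x : K)‖ ≤ ‖(y : K)‖ := by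
  have hy' : (y : K) ≠ 0 := by exact_mod_cast hy
  constructor
  · rintro ⟨z, rfl⟩
    rw [Subring.coe_mul, norm_mul]
    exact mul_le_of_le_one_right (norm_nonneg _) z.2
  · intro h
    refine ⟨⟨x / y, ?_⟩, Subtype.ext (mul_div_cancel₀ _ hy').symm⟩
    change ‖(x : K) / y‖ ≤ 1
    rw [norm_div]
    exact div_le_one_of_le₀ h (norm_nonneg _)

lemma disc_zero_eq_span_pow (hπ : ‖(π : K)‖ = (q : ℝ)⁻¹) (hπ0 : π ≠ 0) (n : ℕ) :
    disc K q 0 n = (Ideal.span {π ^ n} : Set (RoI K)) := by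
  ext x
  rw [SetLike.mem_coe, Ideal.mem_span_singleton, dvd_iff_norm_le (pow_ne_zero n hπ0),
    disc_eq_closedBall, mem_closedBall, dist_zero_right, SubmonoidClass.coe_pow, norm_pow, hπ,
    inv_pow]
  rfl

lemma exists_closedBall_subset_disc_and_disc_subset_closedBall (hq : 1 < q) {ε : ℝ} (hε : 0 < ε)
    (x : RoI K) :
    ∃ k, closedBall x (2 * ε) ⊆ disc K q x k ∧ disc K q x (k + 2) ⊆ closedBall x ε := by
  have hq1 : (1 : ℝ) < q := by exact_mod_cast hq
  have hex : ∃ n : ℕ, ((q : ℝ) ^ n)⁻¹ ≤ 2 * ε := by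
    obtain ⟨n, hn⟩ := pow_unbounded_of_one_lt (2 * ε)⁻¹ hq1
    exact ⟨n, (inv_lt_of_inv_lt₀ (by positivity) hn).le⟩
  set n := Nat.find hex
  refine ⟨n - 1, ?_, ?_⟩
  · rcases Nat.eq_zero_or_pos n with hn | hn
    · rw [hn, Nat.zero_sub, disc_level_zero]
      exact subset_univ _
    · have hlt := Nat.find_min hex (Nat.sub_lt hn one_pos)
      rw [disc_eq_closedBall]
      exact closedBall_subset_closedBall (not_le.1 hlt).le
  · rw [disc_eq_closedBall]
    refine closedBall_subset_closedBall ?_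
    calc ((q : ℝ) ^ (n - 1 + 2))⁻¹ ≤ ((q : ℝ) ^ (n + 1))⁻¹ :=
          inv_anti₀ (by positivity) (pow_le_pow_right₀ hq1.le (by omega))
      _ = ((q : ℝ) ^ n)⁻¹ / q := by rw [pow_succ, mul_inv, div_eq_mul_inv]
      _ ≤ 2 * ε / 2 := div_le_div₀ (by positivity) (Nat.find_spec hex) two_pos
          (by exact_mod_cast hq)
      _ = ε := by ring

end Discs

section Averages

variable {K}

omit [LocallyCompactSpace K] [BorelSpace K]

def discAvg (μ : Measure (RoI K)) (f : RoI K → ℝ) (x : RoI K) (n : ℕ) : ℝ :=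
  ⨍ y in disc K q x n, f y ∂μ

def VBerkAt (μ : Measure (RoI K)) (f : RoI K → ℝ) (D : Set (RoI K)) : ℝ≥0∞ :=
  ∑' D' : {D' : Set (RoI K) // IsDisc K q D' ∧ D' ⊆ D ∧ μ D' = μ D / (q : ℝ≥0∞)},
    ENNReal.ofReal |(⨍ x in D'.1, f x ∂μ) - ⨍ x in D, f x ∂μ|

lemma VBerk_eq_tsum_VBerkAt (μ : Measure (RoI K)) (f : RoI K → ℝ) :
    VBerk K q μ f = ∑' D : {D : Set (RoI K) // IsDisc K q D}, VBerkAt q μ f D := rfl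

def VBerkTail (μ : Measure (RoI K)) (f : RoI K → ℝ) (N : ℕ) : ℝ≥0∞ :=
  ∑' D : {D : {D : Set (RoI K) // IsDisc K q D} // μ D.1 ≤ ((q : ℝ≥0∞) ^ N)⁻¹},
    VBerkAt q μ f D.1

lemma VBerkTail_le_VBerk (μ : Measure (RoI K)) (f : RoI K → ℝ) (N : ℕ) :
    VBerkTail q μ f N ≤ VBerk K q μ f := by
  rw [VBerk_eq_tsum_VBerkAt]
  exact ENNReal.tsum_comp_le_tsum_of_injective Subtype.val_injective _

variable {q}

lemma isLocallyConstant_discAvg (hq : q ≠ 0) (μ : Measure (RoI K)) (f : RoI K → ℝ) (n : ℕ) :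
    IsLocallyConstant fun x => discAvg q μ f x n :=
  (IsLocallyConstant.iff_eventually_eq _).2 fun x => by
    filter_upwards [disc_mem_nhds hq x n] with y hy
    rw [discAvg, discAvg, disc_eq_of_mem hy]

end Averages

section Measure

variable {K q} {π : RoI K}

omit [LocallyCompactSpace K]

lemma measurableSet_disc (a : RoI K) (n : ℕ) : MeasurableSet (disc K q a n) := by
  rw [disc_eq_closedBall]
  exact isClosed_closedBall.measurableSet

variable (hπ : ‖(π : K)‖ = (q : ℝ)⁻¹)
  (hres : Nat.card (↥(RoI K) ⧸ (Ideal.span {π} : Ideal ↥(RoI K))) = q)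
  (μ : Measure (RoI K)) [IsProbabilityMeasure μ] [μ.IsAddHaarMeasure]
include hπ hres

/-- `D_{q^{-n}}(0)` is the ideal `π ^ n O`, of index `q ^ n` in `O`. -/
lemma measure_disc (hq : q ≠ 0) (a : RoI K) (n : ℕ) : μ (disc K q a n) = ((q : ℝ≥0∞) ^ n)⁻¹ := by
  have hπ0 : π ≠ 0 := by
    rintro rfl
    simp only [ZeroMemClass.coe_zero, norm_zero, zero_eq_inv] at hπ
    exact hq (by exact_mod_cast hπ.symm)
  have hindex : (Ideal.span {π ^ n}).toAddSubgroup.index = q ^ n := by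
    rw [Ideal.index_span_singleton_pow hπ0, ← hres]
    rfl
  have : (Ideal.span {π ^ n}).toAddSubgroup.FiniteIndex := ⟨by rw [hindex]; positivity⟩
  have hmeas : MeasurableSet ((Ideal.span {π ^ n}).toAddSubgroup : Set (RoI K)) := by
    rw [Submodule.coe_toAddSubgroup, ← disc_zero_eq_span_pow hπ hπ0]
    exact measurableSet_disc 0 n
  have h := AddSubgroup.index_mul_measure _ hmeas μ
  rw [hindex, measure_univ, Submodule.coe_toAddSubgroup, ← disc_zero_eq_span_pow hπ hπ0,
    mul_comm] at h
  rw [disc_eq_closedBall, μ.addHaar_closedBall_center, ← disc_eq_closedBall,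
    ENNReal.eq_inv_of_mul_eq_one_left h, Nat.cast_pow]

lemma measure_disc_succ (hq : q ≠ 0) (a : RoI K) (n : ℕ) :
    μ (disc K q a (n + 1)) = μ (disc K q a n) / q := by
  rw [measure_disc hπ hres μ hq, measure_disc hπ hres μ hq, pow_succ,
    ENNReal.mul_inv (by simp) (by simp), div_eq_mul_inv]

lemma measure_closedBall_two_mul_le (hq : 1 < q) {ε : ℝ} (hε : 0 < ε) (x : RoI K) :
    μ (closedBall x (2 * ε)) ≤ q ^ 2 * μ (closedBall x ε) := by
  obtain ⟨k, hk2ε, hkε⟩ := exists_closedBall_subset_disc_and_disc_subset_closedBall hq hε x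
  have hq0 : q ≠ 0 := by omega
  calc μ (closedBall x (2 * ε)) ≤ μ (disc K q x k) := measure_mono hk2ε
    _ = q ^ 2 * μ (disc K q x (k + 2)) := by
      rw [measure_disc hπ hres μ hq0, measure_disc hπ hres μ hq0, pow_add,
        ENNReal.mul_inv (by simp) (by simp), mul_left_comm,
        ENNReal.mul_inv_cancel (by simp [hq0]) (by simp), mul_one]
    _ ≤ q ^ 2 * μ (closedBall x ε) := by gcongr

lemma isUnifLocDoublingMeasure (hq : 1 < q) : IsUnifLocDoublingMeasure μ := by
  refine ⟨⟨q ^ 2, ?_⟩⟩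
  filter_upwards [self_mem_nhdsWithin] with ε hε x
  push_cast
  exact measure_closedBall_two_mul_le hπ hres μ hq hε x

lemma edist_discAvg_succ_le (hq : 1 < q) (f : RoI K → ℝ) (y : RoI K) (n : ℕ) :
    edist (discAvg q μ f y n) (discAvg q μ f y (n + 1)) ≤ VBerkAt q μ f (disc K q y n) := by
  rw [edist_comm, edist_dist, Real.dist_eq]
  exact ENNReal.le_tsum (⟨disc K q y (n + 1), ⟨y, n + 1, rfl⟩, disc_succ_subset hq.le y n,
    measure_disc_succ hπ hres μ (by omega) y n⟩ :
      {D' : Set (RoI K) // IsDisc K q D' ∧ D' ⊆ disc K q y n ∧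
        μ D' = μ (disc K q y n) / (q : ℝ≥0∞)})

lemma tsum_edist_discAvg_le (hq : 1 < q) (f : RoI K → ℝ) (y : RoI K) (N : ℕ) :
    ∑' m, edist (discAvg q μ f y (N + m)) (discAvg q μ f y (N + m + 1)) ≤
      VBerkTail q μ f N := by
  have hmeas (m : ℕ) : μ (disc K q y (N + m)) = ((q : ℝ≥0∞) ^ (N + m))⁻¹ :=
    measure_disc hπ hres μ (by omega) y (N + m)
  let chain (m : ℕ) :
      {D : {D : Set (RoI K) // IsDisc K q D} // μ D.1 ≤ ((q : ℝ≥0∞) ^ N)⁻¹} :=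
    ⟨⟨disc K q y (N + m), y, N + m, rfl⟩, by
      rw [hmeas]
      exact ENNReal.inv_le_inv.2 (pow_le_pow_right₀ (by exact_mod_cast hq.le) (by omega))⟩
  have hchain : Function.Injective chain := by
    intro a b hab
    have h := congrArg (fun D => μ D.1.1) hab
    simp only [chain, hmeas, inv_inj] at h
    exact Nat.add_left_cancel (Nat.pow_right_injective hq (by exact_mod_cast h))
  calc ∑' m, edist (discAvg q μ f y (N + m)) (discAvg q μ f y (N + m + 1))
      ≤ ∑' m, VBerkAt q μ f (chain m).1.1 :=
        ENNReal.tsum_le_tsum fun m => edist_discAvg_succ_le hπ hres μ hq f y (N + m)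
    _ ≤ _ := ENNReal.tsum_comp_le_tsum_of_injective hchain fun D => VBerkAt q μ f D.1

lemma tendsto_VBerkTail (hq : 1 < q) {f : RoI K → ℝ} (hV : VBerk K q μ f ≠ ⊤) :
    Tendsto (VBerkTail q μ f) atTop (𝓝 0) := by
  rw [VBerk_eq_tsum_VBerkAt] at hV
  refine ENNReal.tendsto_tsum_subtype_le_zero hV (fun D => ?_) ?_
  · obtain ⟨a, n, hD⟩ := D.2
    rw [hD, measure_disc hπ hres μ (by omega)]
    exact ENNReal.inv_pos.2 (ENNReal.pow_ne_top (ENNReal.natCast_ne_top q))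
  · simpa only [ENNReal.inv_pow] using ENNReal.tendsto_pow_atTop_nhds_zero_of_lt_one
      (ENNReal.inv_lt_one.2 (by exact_mod_cast hq))

lemma exists_tendstoUniformly_discAvg (hq : 1 < q) {f : RoI K → ℝ} (hV : VBerk K q μ f ≠ ⊤) :
    ∃ g : RoI K → ℝ, TendstoUniformly (fun n x => discAvg q μ f x n) g atTop := by
  have hcauchy (y : RoI K) : CauchySeq (discAvg q μ f y) := by
    refine cauchySeq_of_edist_le_of_tsum_ne_top _ (fun n => le_rfl) (ne_top_of_le_ne_top hV ?_)
    simpa using (tsum_edist_discAvg_le hπ hres μ hq f y 0).trans (VBerkTail_le_VBerk q μ f 0)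
  choose g hg using fun y => cauchySeq_tendsto_of_complete (hcauchy y)
  refine ⟨g, EMetric.tendstoUniformly_iff.2 fun ε hε => ?_⟩
  filter_upwards [(tendsto_VBerkTail hπ hres μ hq hV).eventually (gt_mem_nhds hε)] with N hN y
  rw [edist_comm]
  exact (edist_le_tsum_of_edist_le_of_tendsto _ (fun n => le_rfl) (hg y) N).trans_lt
    ((tsum_edist_discAvg_le hπ hres μ hq f y N).trans_lt hN)

lemma ae_tendsto_discAvg [SecondCountableTopology (RoI K)] (hq : 1 < q) {f : RoI K → ℝ}
    (hf : Integrable f μ) :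
    ∀ᵐ x ∂μ, Tendsto (fun n => discAvg q μ f x n) atTop (𝓝 (f x)) := by
  have := isUnifLocDoublingMeasure hπ hres μ hq
  have hr : Tendsto (fun n : ℕ => ((q : ℝ) ^ n)⁻¹) atTop (𝓝[>] 0) :=
    tendsto_nhdsWithin_iff.2 ⟨tendsto_inv_atTop_zero.comp
      (tendsto_pow_atTop_atTop_of_one_lt (by exact_mod_cast hq)),
      Eventually.of_forall fun n => mem_Ioi.2 (by positivity)⟩
  filter_upwards [IsUnifLocDoublingMeasure.ae_tendsto_average μ hf.locallyIntegrable 1] with x hx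
  simpa only [discAvg, disc_eq_closedBall] using
    hx (fun _ => x) _ hr (Eventually.of_forall fun n => mem_closedBall_self (by positivity))

end Measure

theorem VBerk_finite_ae_eq_continuous
    (hq : 1 < q)
    (hπ : ‖(π : K)‖ = (q : ℝ)⁻¹)
    (hres : Nat.card (↥(RoI K) ⧸ (Ideal.span {π} : Ideal ↥(RoI K))) = q)
    (μ : Measure (RoI K)) [IsProbabilityMeasure μ] [μ.IsAddHaarMeasure]
    (f : RoI K → ℝ) (hf : Integrable f μ) (hV : VBerk K q μ f < ⊤) :
    ∃! g : RoI K → ℝ, Continuous g ∧ f =ᵐ[μ] g := by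
  have : ProperSpace K := .of_nontriviallyNormedField_of_weaklyLocallyCompactSpace K
  obtain ⟨g, hg⟩ := exists_tendstoUniformly_discAvg hπ hres μ hq hV.ne
  have hgc : Continuous g := hg.continuous <| Frequently.of_forall fun n =>
    (isLocallyConstant_discAvg (by omega) μ f n).continuous
  have hfg : f =ᵐ[μ] g := by
    filter_upwards [ae_tendsto_discAvg hπ hres μ hq hf] with x hx
    exact tendsto_nhds_unique hx (hg.tendsto_at x)
  refine ⟨g, ⟨hgc, hfg⟩, fun g' ⟨hg'c, hfg'⟩ => ?_⟩
  exact (Continuous.ae_eq_iff_eq μ hg'c hgc).1 (hfg'.symm.trans hfg)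

end NAKoksma
end
end
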